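/- arXiv:1610.09310 — 3 statements merged into one kernel-verified Lean document; each statement's English description precedes it below -/
import Mathlib

section
/- With the hexagonal lattice random walk of the previous setting, Var(Xₙ) = σ₁² n + θ₃ iₙ for all n ∈ ℕ, where iₙ = (1-(-1)ⁿ)/2, σ₁² = (9a²/8)[(q₀₁+q₀₂) - (q₀₁+q₀₂)² + (q₁₁+q₁₂) - (q₁₁+q₁₂)²], and θ₃ = (9a²/8)[(q₀₁+q₀₂) - (q₀₁+q₀₂)² - (q₁₁+q₁₂) + (q₁₁+q₁₂)²]. -/
/-!
The horizontal step `X k` takes only two values, `3a/2` apart: it differs from `±a` with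
probability `p = q_{i1} + q_{i2}`, where `i` is the parity of `k`. Hence
`Var (X k) = (9a²/4)(p - p²)`. The steps are independent, so `Var Xₙ` is the sum of these
variances, and counting the even and odd indices below `n` gives `σ₁² n + θ₃ iₙ`.
-/

open MeasureTheory ProbabilityTheory

noncomputable def threeDirac {α : Type*} [MeasurableSpace α] (c₀ c₁ c₂ : ℝ) (x₀ x₁ x₂ : α) :
    Measure α :=
  ENNReal.ofReal c₀ • Measure.dirac x₀ + ENNReal.ofReal c₁ • Measure.dirac x₁
    + ENNReal.ofReal c₂ • Measure.dirac x₂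

section ThreeDirac

variable {α β : Type*} [MeasurableSpace α] [MeasurableSpace β]
  {c₀ c₁ c₂ : ℝ} {x₀ x₁ x₂ : α}

lemma map_threeDirac {f : α → β} (hf : Measurable f) :
    (threeDirac c₀ c₁ c₂ x₀ x₁ x₂).map f = threeDirac c₀ c₁ c₂ (f x₀) (f x₁) (f x₂) := by
  simp only [threeDirac, Measure.map_add _ _ hf, Measure.map_smul, Measure.map_dirac' hf]

variable [MeasurableSingletonClass α]

lemma integrable_ofReal_smul_dirac (c : ℝ) (x : α) (g : α → ℝ) :
    Integrable g (ENNReal.ofReal c • Measure.dirac x) :=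
  (integrable_dirac enorm_lt_top).smul_measure ENNReal.ofReal_ne_top

lemma integrable_threeDirac (g : α → ℝ) : Integrable g (threeDirac c₀ c₁ c₂ x₀ x₁ x₂) :=
  ((integrable_ofReal_smul_dirac c₀ x₀ g).add_measure
    (integrable_ofReal_smul_dirac c₁ x₁ g)).add_measure (integrable_ofReal_smul_dirac c₂ x₂ g)

lemma integral_threeDirac (h₀ : 0 ≤ c₀) (h₁ : 0 ≤ c₁) (h₂ : 0 ≤ c₂) (g : α → ℝ) :
    ∫ x, g x ∂threeDirac c₀ c₁ c₂ x₀ x₁ x₂ = c₀ * g x₀ + c₁ * g x₁ + c₂ * g x₂ := by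
  have h (c : ℝ) (x : α) := integrable_ofReal_smul_dirac c x g
  rw [threeDirac, integral_add_measure ((h _ _).add_measure (h _ _)) (h _ _),
    integral_add_measure (h _ _) (h _ _), integral_smul_measure, integral_smul_measure,
    integral_smul_measure, integral_dirac, integral_dirac, integral_dirac,
    ENNReal.toReal_ofReal h₀, ENNReal.toReal_ofReal h₁, ENNReal.toReal_ofReal h₂]
  simp only [smul_eq_mul]

end ThreeDirac

section LawThreeDirac

variable {Ω α β : Type*} [MeasurableSpace Ω] [MeasurableSpace α] [MeasurableSpace β]
  {μ : Measure Ω} {c₀ c₁ c₂ : ℝ}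

lemma map_eq_threeDirac_of_map_prodMk_eq {X : Ω → α} {Y : Ω → β} (hX : Measurable X)
    (hY : Measurable Y) {p₀ p₁ p₂ : α × β}
    (hlaw : μ.map (fun ω => (X ω, Y ω)) = threeDirac c₀ c₁ c₂ p₀ p₁ p₂) :
    μ.map X = threeDirac c₀ c₁ c₂ p₀.1 p₁.1 p₂.1 := by
  rw [← map_threeDirac measurable_fst, ← hlaw,
    Measure.map_map measurable_fst (hX.prodMk hY)]
  rfl

variable [MeasurableSingletonClass α] {Z : Ω → α} {x₀ x₁ x₂ : α}

lemma integrable_comp_of_map_eq_threeDirac (hZ : Measurable Z)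
    (hlaw : μ.map Z = threeDirac c₀ c₁ c₂ x₀ x₁ x₂) {g : α → ℝ} (hg : Measurable g) :
    Integrable (fun ω => g (Z ω)) μ := by
  refine (integrable_map_measure hg.aestronglyMeasurable hZ.aemeasurable).1 ?_
  rw [hlaw]
  exact integrable_threeDirac g

lemma integral_comp_of_map_eq_threeDirac (hZ : Measurable Z)
    (hlaw : μ.map Z = threeDirac c₀ c₁ c₂ x₀ x₁ x₂) (h₀ : 0 ≤ c₀) (h₁ : 0 ≤ c₁) (h₂ : 0 ≤ c₂)
    {g : α → ℝ} (hg : Measurable g) :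
    ∫ ω, g (Z ω) ∂μ = c₀ * g x₀ + c₁ * g x₁ + c₂ * g x₂ := by
  rw [← integral_map hZ.aemeasurable hg.aestronglyMeasurable, hlaw,
    integral_threeDirac h₀ h₁ h₂]

end LawThreeDirac

section RealLaw

variable {Ω : Type*} [MeasurableSpace Ω] {μ : Measure Ω} {Z : Ω → ℝ} {c₀ c₁ c₂ : ℝ}

lemma memLp_two_of_map_eq_threeDirac (hZ : Measurable Z) {x₀ x₁ x₂ : ℝ}
    (hlaw : μ.map Z = threeDirac c₀ c₁ c₂ x₀ x₁ x₂) : MemLp Z 2 μ :=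
  (memLp_two_iff_integrable_sq hZ.aestronglyMeasurable).2 <|
    integrable_comp_of_map_eq_threeDirac hZ hlaw (measurable_id.pow_const 2)

lemma variance_of_map_eq_threeDirac (hZ : Measurable Z) {x y : ℝ}
    (hlaw : μ.map Z = threeDirac c₀ c₁ c₂ x y y) (h₀ : 0 ≤ c₀) (h₁ : 0 ≤ c₁) (h₂ : 0 ≤ c₂)
    (hsum : c₀ + c₁ + c₂ = 1) :
    variance Z μ = (x - y) ^ 2 * ((c₁ + c₂) - (c₁ + c₂) ^ 2) := by
  have hmean : μ[Z] = c₀ * x + c₁ * y + c₂ * y :=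
    integral_comp_of_map_eq_threeDirac hZ hlaw h₀ h₁ h₂ measurable_id
  rw [variance_eq_integral hZ.aemeasurable, hmean, integral_comp_of_map_eq_threeDirac hZ hlaw
    h₀ h₁ h₂ (g := fun t => (t - (c₀ * x + c₁ * y + c₂ * y)) ^ 2) (by fun_prop),
    show c₀ = 1 - (c₁ + c₂) by linarith]
  ring

end RealLaw

lemma sum_range_ite_even (A B : ℝ) (n : ℕ) :
    ∑ k ∈ Finset.range n, (if Even k then A else B)
      = (A + B) / 2 * n + (A - B) / 2 * ((1 - (-1 : ℝ) ^ n) / 2) := by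
  induction n with
  | zero => simp
  | succ n ih =>
    rw [Finset.sum_range_succ, ih, pow_succ]
    rcases Nat.even_or_odd n with hn | hn
    · rw [if_pos hn, hn.neg_one_pow]
      push_cast
      ring
    · rw [if_neg (Nat.not_even_iff_odd.mpr hn), hn.neg_one_pow]
      push_cast
      ring

theorem stmt_12_general {Ω : Type*} [MeasurableSpace Ω] (μ : Measure Ω)
    (a : ℝ)
    (q₀₀ q₀₁ q₀₂ q₁₀ q₁₁ q₁₂ : ℝ)
    (hq₀₀ : 0 ≤ q₀₀) (hq₀₁ : 0 ≤ q₀₁) (hq₀₂ : 0 ≤ q₀₂)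
    (hq₁₀ : 0 ≤ q₁₀) (hq₁₁ : 0 ≤ q₁₁) (hq₁₂ : 0 ≤ q₁₂)
    (hsum₀ : q₀₀ + q₀₁ + q₀₂ = 1) (hsum₁ : q₁₀ + q₁₁ + q₁₂ = 1)
    (X Y : ℕ → Ω → ℝ)
    (hXm : ∀ k, Measurable (X k)) (hYm : ∀ k, Measurable (Y k))
    (hlaw₀ : ∀ k, Even k → μ.map (fun ω => (X k ω, Y k ω)) =
        ENNReal.ofReal q₀₀ • Measure.dirac ((a, 0) : ℝ × ℝ)
      + ENNReal.ofReal q₀₁ • Measure.dirac ((-a / 2, a * Real.sqrt 3 / 2) : ℝ × ℝ)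
      + ENNReal.ofReal q₀₂ • Measure.dirac ((-a / 2, -(a * Real.sqrt 3) / 2) : ℝ × ℝ))
    (hlaw₁ : ∀ k, Odd k → μ.map (fun ω => (X k ω, Y k ω)) =
        ENNReal.ofReal q₁₀ • Measure.dirac ((-a, 0) : ℝ × ℝ)
      + ENNReal.ofReal q₁₁ • Measure.dirac ((a / 2, -(a * Real.sqrt 3) / 2) : ℝ × ℝ)
      + ENNReal.ofReal q₁₂ • Measure.dirac ((a / 2, a * Real.sqrt 3 / 2) : ℝ × ℝ))
    (hind : iIndepFun
      (fun k ω => (X k ω, Y k ω)) μ)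
    (n : ℕ) :
    variance (fun ω => ∑ k ∈ Finset.range n, X k ω) μ =
      (9 * a ^ 2 / 8) * ((q₀₁ + q₀₂) - (q₀₁ + q₀₂) ^ 2 + (q₁₁ + q₁₂) - (q₁₁ + q₁₂) ^ 2) * n
      + (9 * a ^ 2 / 8) * ((q₀₁ + q₀₂) - (q₀₁ + q₀₂) ^ 2 - (q₁₁ + q₁₂) + (q₁₁ + q₁₂) ^ 2)
        * ((1 - (-1 : ℝ) ^ n) / 2) := by
  have hlawX₀ (k : ℕ) (hk : Even k) :=
    map_eq_threeDirac_of_map_prodMk_eq (hXm k) (hYm k) (hlaw₀ k hk)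
  have hlawX₁ (k : ℕ) (hk : Odd k) :=
    map_eq_threeDirac_of_map_prodMk_eq (hXm k) (hYm k) (hlaw₁ k hk)
  have hmem (k : ℕ) : MemLp (X k) 2 μ := by
    rcases Nat.even_or_odd k with hk | hk
    exacts [memLp_two_of_map_eq_threeDirac (hXm k) (hlawX₀ k hk),
      memLp_two_of_map_eq_threeDirac (hXm k) (hlawX₁ k hk)]
  have hvar (k : ℕ) : variance (X k) μ = if Even k
      then 9 * a ^ 2 / 4 * ((q₀₁ + q₀₂) - (q₀₁ + q₀₂) ^ 2)
      else 9 * a ^ 2 / 4 * ((q₁₁ + q₁₂) - (q₁₁ + q₁₂) ^ 2) := by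
    rcases Nat.even_or_odd k with hk | hk
    · rw [if_pos hk, variance_of_map_eq_threeDirac (hXm k) (hlawX₀ k hk) hq₀₀ hq₀₁ hq₀₂ hsum₀]
      ring
    · rw [if_neg (Nat.not_even_iff_odd.mpr hk),
        variance_of_map_eq_threeDirac (hXm k) (hlawX₁ k hk) hq₁₀ hq₁₁ hq₁₂ hsum₁]
      ring
  have hpair : Set.Pairwise ↑(Finset.range n) fun i j => IndepFun (X i) (X j) μ :=
    fun i _ j _ hij => (hind.indepFun hij).comp measurable_fst measurable_fst
  rw [← Finset.sum_fn, IndepFun.variance_sum (fun k _ => hmem k) hpair,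
    Finset.sum_congr rfl fun k _ => hvar k, sum_range_ite_even]
  ring

theorem stmt_12 {Ω : Type*} [MeasurableSpace Ω] (μ : Measure Ω) [IsProbabilityMeasure μ]
    (a : ℝ) (ha : 0 < a)
    (q₀₀ q₀₁ q₀₂ q₁₀ q₁₁ q₁₂ : ℝ)
    (hq₀₀ : 0 ≤ q₀₀) (hq₀₁ : 0 ≤ q₀₁) (hq₀₂ : 0 ≤ q₀₂)
    (hq₁₀ : 0 ≤ q₁₀) (hq₁₁ : 0 ≤ q₁₁) (hq₁₂ : 0 ≤ q₁₂)
    (hsum₀ : q₀₀ + q₀₁ + q₀₂ = 1) (hsum₁ : q₁₀ + q₁₁ + q₁₂ = 1)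
    (X Y : ℕ → Ω → ℝ)
    (hXm : ∀ k, Measurable (X k)) (hYm : ∀ k, Measurable (Y k))
    (hlaw₀ : ∀ k, Even k → μ.map (fun ω => (X k ω, Y k ω)) =
        ENNReal.ofReal q₀₀ • Measure.dirac ((a, 0) : ℝ × ℝ)
      + ENNReal.ofReal q₀₁ • Measure.dirac ((-a / 2, a * Real.sqrt 3 / 2) : ℝ × ℝ)
      + ENNReal.ofReal q₀₂ • Measure.dirac ((-a / 2, -(a * Real.sqrt 3) / 2) : ℝ × ℝ))
    (hlaw₁ : ∀ k, Odd k → μ.map (fun ω => (X k ω, Y k ω)) =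
        ENNReal.ofReal q₁₀ • Measure.dirac ((-a, 0) : ℝ × ℝ)
      + ENNReal.ofReal q₁₁ • Measure.dirac ((a / 2, -(a * Real.sqrt 3) / 2) : ℝ × ℝ)
      + ENNReal.ofReal q₁₂ • Measure.dirac ((a / 2, a * Real.sqrt 3 / 2) : ℝ × ℝ))
    (hind : iIndepFun
      (fun k ω => (X k ω, Y k ω)) μ)
    (n : ℕ) :
    variance (fun ω => ∑ k ∈ Finset.range n, X k ω) μ =
      (9 * a ^ 2 / 8) * ((q₀₁ + q₀₂) - (q₀₁ + q₀₂) ^ 2 + (q₁₁ + q₁₂) - (q₁₁ + q₁₂) ^ 2) * n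
      + (9 * a ^ 2 / 8) * ((q₀₁ + q₀₂) - (q₀₁ + q₀₂) ^ 2 - (q₁₁ + q₁₂) + (q₁₁ + q₁₂) ^ 2)
        * ((1 - (-1 : ℝ) ^ n) / 2) :=
  stmt_12_general μ a q₀₀ q₀₁ q₀₂ q₁₀ q₁₁ q₁₂ hq₀₀ hq₀₁ hq₀₂ hq₁₀ hq₁₁ hq₁₂ hsum₀ hsum₁ X Y hXm hYm
    hlaw₀ hlaw₁ hind n
end

section
/- Let G(u,v;n) = E[u^{Xₙ} v^{Yₙ}] be the probability generating function of the hexagonal lattice random walk. Then for every (λ₁, λ₂) ∈ ℝ², the limit lim_{n→∞} (1/n) log G(e^{λ₁}, e^{λ₂}; n) exists and equals Λ(λ₁,λ₂) = (1/2) log(g₀(λ₁,λ₂) g₁(λ₁,λ₂)), where gᵢ(λ₁,λ₂) = q_{i,0} + q_{i,1} exp((-1)^i √3 a(-(√3/2)λ₁ + (1/2)λ₂)) + q_{i,2} exp((-1)^{i+1} √3 a((√3/2)λ₁ + (1/2)λ₂)) for i = 0,1. -/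
/-!
The steps are independent, so the generating function factorizes into per-step moment
generating functions. A step taken at an even time contributes `exp (a λ₁) g₀`, one taken at an
odd time contributes `exp (-a λ₁) g₁`; averaging the logarithms of these alternating factors
gives `(1/2) log (g₀ g₁)`, the `exp (± a λ₁)` cancelling in pairs.
-/

open MeasureTheory ProbabilityTheory Filter Topology Finset Real

theorem MeasureTheory.integral_three_dirac {α E : Type*} [MeasurableSpace α]
    [MeasurableSingletonClass α] [NormedAddCommGroup E] [NormedSpace ℝ E] [CompleteSpace E]
    {q₀ q₁ q₂ : ℝ} (h₀ : 0 ≤ q₀) (h₁ : 0 ≤ q₁) (h₂ : 0 ≤ q₂) (x₀ x₁ x₂ : α) (φ : α → E) :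
    ∫ x, φ x ∂(ENNReal.ofReal q₀ • Measure.dirac x₀ + ENNReal.ofReal q₁ • Measure.dirac x₁
      + ENNReal.ofReal q₂ • Measure.dirac x₂)
    = q₀ • φ x₀ + q₁ • φ x₁ + q₂ • φ x₂ := by
  have hint (q : ℝ) (x : α) : Integrable φ (ENNReal.ofReal q • Measure.dirac x) :=
    (integrable_dirac enorm_lt_top).smul_measure ENNReal.ofReal_ne_top
  rw [integral_add_measure ((hint _ _).add_measure (hint _ _)) (hint _ _),
    integral_add_measure (hint _ _) (hint _ _), integral_smul_measure, integral_smul_measure,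
    integral_smul_measure, integral_dirac, integral_dirac, integral_dirac,
    ENNReal.toReal_ofReal h₀, ENNReal.toReal_ofReal h₁, ENNReal.toReal_ofReal h₂]

theorem ProbabilityTheory.mgf_linear_of_map_eq_three_dirac {Ω : Type*} [MeasurableSpace Ω]
    {μ : Measure Ω} {V : Ω → ℝ × ℝ} (hV : Measurable V) {q₀ q₁ q₂ : ℝ}
    (h₀ : 0 ≤ q₀) (h₁ : 0 ≤ q₁) (h₂ : 0 ≤ q₂) {x₀ x₁ x₂ : ℝ × ℝ}
    (hlaw : μ.map V = ENNReal.ofReal q₀ • Measure.dirac x₀ + ENNReal.ofReal q₁ • Measure.dirac x₁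
      + ENNReal.ofReal q₂ • Measure.dirac x₂) (lam₁ lam₂ : ℝ) :
    mgf (fun ω => lam₁ * (V ω).1 + lam₂ * (V ω).2) μ 1
      = q₀ * exp (lam₁ * x₀.1 + lam₂ * x₀.2) + q₁ * exp (lam₁ * x₁.1 + lam₂ * x₁.2)
        + q₂ * exp (lam₁ * x₂.1 + lam₂ * x₂.2) := by
  have hφ : Measurable fun x : ℝ × ℝ => exp (lam₁ * x.1 + lam₂ * x.2) := by fun_prop
  simp only [mgf, one_mul]
  rw [← integral_map hV.aemeasurable hφ.aestronglyMeasurable, hlaw,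
    integral_three_dirac h₀ h₁ h₂, smul_eq_mul, smul_eq_mul, smul_eq_mul]

theorem Real.add_mul_exp_eq_exp_mul {c A₀ A₁ A₂ B₁ B₂ : ℝ} (q₀ q₁ q₂ : ℝ)
    (h₀ : A₀ = c) (h₁ : A₁ = c + B₁) (h₂ : A₂ = c + B₂) :
    q₀ * exp A₀ + q₁ * exp A₁ + q₂ * exp A₂ = exp c * (q₀ + q₁ * exp B₁ + q₂ * exp B₂) := by
  subst h₀ h₁ h₂
  rw [exp_add, exp_add]
  ring

theorem Real.tendsto_log_prod_alternating_div {c₀ c₁ : ℝ} (h₀ : 0 < c₀) (h₁ : 0 < c₁) :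
    Tendsto (fun n : ℕ => 1 / (n : ℝ) * log (∏ k ∈ range n, if Even k then c₀ else c₁))
      atTop (𝓝 (1 / 2 * log (c₀ * c₁))) := by
  set M := (log c₀ + log c₁) / 2
  set D := (log c₀ - log c₁) / 2
  have hlog (k : ℕ) : log (if Even k then c₀ else c₁) = M + D * (-1) ^ k := by
    rcases Nat.even_or_odd k with hk | hk
    · rw [if_pos hk, hk.neg_one_pow]; ring
    · rw [if_neg (Nat.not_even_iff_odd.mpr hk), hk.neg_one_pow]; ring
  have hsum (n : ℕ) : log (∏ k ∈ range n, if Even k then c₀ else c₁)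
      = n * M + D * (if Even n then 0 else 1) := by
    rw [log_prod fun k _ => by split_ifs <;> positivity, sum_congr rfl fun k _ => hlog k,
      sum_add_distrib, ← mul_sum, neg_one_geom_sum, sum_const, card_range, nsmul_eq_mul]
  have hbdd : IsBoundedUnder (· ≤ ·) atTop
      fun n : ℕ => ‖D * (if Even n then 0 else 1 : ℝ)‖ :=
    isBoundedUnder_of ⟨|D|, fun n => by split_ifs <;> simp⟩
  have hlim : Tendsto (fun n : ℕ => M + 1 / (n : ℝ) * (D * (if Even n then 0 else 1)))
      atTop (𝓝 M) := by
    simpa using (tendsto_one_div_atTop_nhds_zero_nat.zero_mul_isBoundedUnder_le hbdd).const_add M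
  rw [log_mul h₀.ne' h₁.ne', show 1 / 2 * (log c₀ + log c₁) = M by ring]
  refine hlim.congr' (eventually_atTop.2 ⟨1, fun n hn => ?_⟩)
  have hn₀ : (n : ℝ) ≠ 0 := by positivity
  beta_reduce
  rw [hsum]
  field_simp

theorem stmt_14_general {Ω : Type*} [MeasurableSpace Ω] (μ : Measure Ω)
    (a : ℝ)
    (q₀₀ q₀₁ q₀₂ q₁₀ q₁₁ q₁₂ : ℝ)
    (hq₀₀ : 0 < q₀₀) (hq₀₁ : 0 < q₀₁) (hq₀₂ : 0 < q₀₂)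
    (hq₁₀ : 0 < q₁₀) (hq₁₁ : 0 < q₁₁) (hq₁₂ : 0 < q₁₂)
    (X Y : ℕ → Ω → ℝ)
    (hXm : ∀ k, Measurable (X k)) (hYm : ∀ k, Measurable (Y k))
    (hlaw₀ : ∀ k, Even k → μ.map (fun ω => (X k ω, Y k ω)) =
        ENNReal.ofReal q₀₀ • Measure.dirac ((a, 0) : ℝ × ℝ)
      + ENNReal.ofReal q₀₁ • Measure.dirac ((-a / 2, a * Real.sqrt 3 / 2) : ℝ × ℝ)
      + ENNReal.ofReal q₀₂ • Measure.dirac ((-a / 2, -(a * Real.sqrt 3) / 2) : ℝ × ℝ))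
    (hlaw₁ : ∀ k, Odd k → μ.map (fun ω => (X k ω, Y k ω)) =
        ENNReal.ofReal q₁₀ • Measure.dirac ((-a, 0) : ℝ × ℝ)
      + ENNReal.ofReal q₁₁ • Measure.dirac ((a / 2, -(a * Real.sqrt 3) / 2) : ℝ × ℝ)
      + ENNReal.ofReal q₁₂ • Measure.dirac ((a / 2, a * Real.sqrt 3 / 2) : ℝ × ℝ))
    (hind : iIndepFun
      (fun k ω => (X k ω, Y k ω)) μ)
    (lam₁ lam₂ : ℝ) :
    Filter.Tendsto (fun n : ℕ =>
        (1 / (n : ℝ)) * Real.log (∫ ω, Real.exp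
          (lam₁ * ∑ k ∈ Finset.range n, X k ω + lam₂ * ∑ k ∈ Finset.range n, Y k ω) ∂μ))
      Filter.atTop
      (nhds ((1 / 2) * Real.log (
        (q₀₀ + q₀₁ * Real.exp (Real.sqrt 3 * a * (-(Real.sqrt 3 / 2) * lam₁ + (1 / 2) * lam₂))
             + q₀₂ * Real.exp (-(Real.sqrt 3 * a * ((Real.sqrt 3 / 2) * lam₁ + (1 / 2) * lam₂)))) *
        (q₁₀ + q₁₁ * Real.exp (-(Real.sqrt 3 * a * (-(Real.sqrt 3 / 2) * lam₁ + (1 / 2) * lam₂)))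
             + q₁₂ * Real.exp (Real.sqrt 3 * a * ((Real.sqrt 3 / 2) * lam₁ + (1 / 2) * lam₂)))))) := by
  set g₀ := q₀₀ + q₀₁ * exp (√3 * a * (-(√3 / 2) * lam₁ + (1 / 2) * lam₂))
    + q₀₂ * exp (-(√3 * a * ((√3 / 2) * lam₁ + (1 / 2) * lam₂)))
  set g₁ := q₁₀ + q₁₁ * exp (-(√3 * a * (-(√3 / 2) * lam₁ + (1 / 2) * lam₂)))
    + q₁₂ * exp (√3 * a * ((√3 / 2) * lam₁ + (1 / 2) * lam₂))
  have h3 : √3 * √3 = 3 := mul_self_sqrt (by norm_num)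
  set Z : ℕ → Ω → ℝ := fun k ω => lam₁ * X k ω + lam₂ * Y k ω
  have hmgf (k : ℕ) :
      mgf (Z k) μ 1 = if Even k then exp (a * lam₁) * g₀ else exp (-(a * lam₁)) * g₁ := by
    have hV : Measurable fun ω => (X k ω, Y k ω) := (hXm k).prodMk (hYm k)
    split_ifs with hk
    · rw [mgf_linear_of_map_eq_three_dirac hV hq₀₀.le hq₀₁.le hq₀₂.le (hlaw₀ k hk)]
      exact add_mul_exp_eq_exp_mul _ _ _ (by ring) (by linear_combination a * lam₁ / 2 * h3)
        (by linear_combination a * lam₁ / 2 * h3)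
    · rw [mgf_linear_of_map_eq_three_dirac hV hq₁₀.le hq₁₁.le hq₁₂.le
        (hlaw₁ k (Nat.not_even_iff_odd.mp hk))]
      exact add_mul_exp_eq_exp_mul _ _ _ (by ring) (by linear_combination -(a * lam₁) / 2 * h3)
        (by linear_combination -(a * lam₁) / 2 * h3)
  have hG (n : ℕ) : ∫ ω, exp (lam₁ * ∑ k ∈ range n, X k ω + lam₂ * ∑ k ∈ range n, Y k ω) ∂μ
      = ∏ k ∈ range n, if Even k then exp (a * lam₁) * g₀ else exp (-(a * lam₁)) * g₁ := by
    have hindZ : iIndepFun Z μ := hind.comp (fun _ p => lam₁ * p.1 + lam₂ * p.2) (by fun_prop)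
    rw [← prod_congr rfl fun k _ => hmgf k, ← hindZ.mgf_sum (fun k => by fun_prop)]
    simp only [mgf, one_mul, Finset.sum_apply, Z, mul_sum, sum_add_distrib]
  have hcancel : exp (a * lam₁) * g₀ * (exp (-(a * lam₁)) * g₁) = g₀ * g₁ := by
    rw [exp_neg]; field_simp
  simp only [hG, ← hcancel]
  exact tendsto_log_prod_alternating_div (by positivity) (by positivity)

theorem stmt_14 {Ω : Type*} [MeasurableSpace Ω] (μ : Measure Ω) [IsProbabilityMeasure μ]
    (a : ℝ) (ha : 0 < a)
    (q₀₀ q₀₁ q₀₂ q₁₀ q₁₁ q₁₂ : ℝ)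
    (hq₀₀ : 0 < q₀₀) (hq₀₁ : 0 < q₀₁) (hq₀₂ : 0 < q₀₂)
    (hq₁₀ : 0 < q₁₀) (hq₁₁ : 0 < q₁₁) (hq₁₂ : 0 < q₁₂)
    (hsum₀ : q₀₀ + q₀₁ + q₀₂ = 1) (hsum₁ : q₁₀ + q₁₁ + q₁₂ = 1)
    (X Y : ℕ → Ω → ℝ)
    (hXm : ∀ k, Measurable (X k)) (hYm : ∀ k, Measurable (Y k))
    (hlaw₀ : ∀ k, Even k → μ.map (fun ω => (X k ω, Y k ω)) =
        ENNReal.ofReal q₀₀ • Measure.dirac ((a, 0) : ℝ × ℝ)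
      + ENNReal.ofReal q₀₁ • Measure.dirac ((-a / 2, a * Real.sqrt 3 / 2) : ℝ × ℝ)
      + ENNReal.ofReal q₀₂ • Measure.dirac ((-a / 2, -(a * Real.sqrt 3) / 2) : ℝ × ℝ))
    (hlaw₁ : ∀ k, Odd k → μ.map (fun ω => (X k ω, Y k ω)) =
        ENNReal.ofReal q₁₀ • Measure.dirac ((-a, 0) : ℝ × ℝ)
      + ENNReal.ofReal q₁₁ • Measure.dirac ((a / 2, -(a * Real.sqrt 3) / 2) : ℝ × ℝ)
      + ENNReal.ofReal q₁₂ • Measure.dirac ((a / 2, a * Real.sqrt 3 / 2) : ℝ × ℝ))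
    (hind : iIndepFun
      (fun k ω => (X k ω, Y k ω)) μ)
    (lam₁ lam₂ : ℝ) :
    Filter.Tendsto (fun n : ℕ =>
        (1 / (n : ℝ)) * Real.log (∫ ω, Real.exp
          (lam₁ * ∑ k ∈ Finset.range n, X k ω + lam₂ * ∑ k ∈ Finset.range n, Y k ω) ∂μ))
      Filter.atTop
      (nhds ((1 / 2) * Real.log (
        (q₀₀ + q₀₁ * Real.exp (Real.sqrt 3 * a * (-(Real.sqrt 3 / 2) * lam₁ + (1 / 2) * lam₂))
             + q₀₂ * Real.exp (-(Real.sqrt 3 * a * ((Real.sqrt 3 / 2) * lam₁ + (1 / 2) * lam₂)))) *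
        (q₁₀ + q₁₁ * Real.exp (-(Real.sqrt 3 * a * (-(Real.sqrt 3 / 2) * lam₁ + (1 / 2) * lam₂)))
             + q₁₂ * Real.exp (Real.sqrt 3 * a * ((Real.sqrt 3 / 2) * lam₁ + (1 / 2) * lam₂)))))) :=
  stmt_14_general μ a q₀₀ q₀₁ q₀₂ q₁₀ q₁₁ q₁₂ hq₀₀ hq₀₁ hq₀₂ hq₁₀ hq₁₁ hq₁₂ X Y hXm hYm hlaw₀ hlaw₁
    hind lam₁ lam₂
end

section
/- Let (Xₙ, Yₙ) be the hexagonal lattice random walk and suppose {aₙ} is a sequence of positive reals with aₙ → 0 and n·aₙ → ∞. Then for every (λ₁, λ₂) ∈ ℝ², aₙ·( log E[exp(λ₁ Xₙ/√(n aₙ) + λ₂ Yₙ/√(n aₙ))] − (λ₁ E[Xₙ] + λ₂ E[Yₙ])/√(n aₙ) ) converges as n → ∞ to (1/2)(λ₁² σ₁² + λ₂² σ₂² + 2 λ₁ λ₂ σ₁₂), where σ₁² = lim Var(Xₙ)/n, σ₂² = lim Var(Yₙ)/n, σ₁₂ = lim Cov(Xₙ,Yₙ)/n. -/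
/-!
Put `Z k = λ₁ X k + λ₂ Y k`, `Sₙ = ∑_{k<n} Z k` and `t = (n aₙ)^(-1/2)`. The quantity in question
is `aₙ (K_{Sₙ}(t) - t E Sₙ) = (K_{Sₙ}(t) - t E Sₙ) / (n t²)`, where `K` is the cumulant generating function. By independence
`K_{Sₙ} = ∑ K_{Z k}`, and since the steps alternate between two laws this equals
`(⌈n/2⌉/n) (K₀(t) - t m₀)/t² + (⌊n/2⌋/n) (K₁(t) - t m₁)/t²`. As `t → 0` each quotient tends to
half the variance of the step, because `K(0) = 0`, `K'(0) = m` and `K''(0) = Var`; so the limit is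
`(Var Z₀ + Var Z₁)/4`, and these variances are read off the three-point step laws.
-/

open MeasureTheory ProbabilityTheory Real Filter Topology Finset

lemma sum_range_mod_two {M : Type*} [AddCommMonoid M] (g : ℕ → M) (n : ℕ) :
    ∑ k ∈ range n, g (k % 2) = ((n + 1) / 2) • g 0 + (n / 2) • g 1 := by
  induction n with
  | zero => simp
  | succ n ih =>
    rw [sum_range_succ, ih]
    rcases Nat.mod_two_eq_zero_or_one n with h | h
    · rw [h, show (n + 1 + 1) / 2 = (n + 1) / 2 + 1 by omega, show (n + 1) / 2 = n / 2 by omega,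
        succ_nsmul]
      abel
    · rw [h, show (n + 1 + 1) / 2 = (n + 1) / 2 by omega, add_assoc, ← succ_nsmul,
        show n / 2 + 1 = (n + 1) / 2 by omega]

lemma tendsto_natCast_div_two_div_atTop :
    Tendsto (fun n : ℕ => ((n / 2 : ℕ) : ℝ) / n) atTop (𝓝 (1 / 2)) := by
  have h := (tendsto_nat_floor_div_atTop (R := ℝ)).comp
    ((tendsto_natCast_atTop_atTop (R := ℝ)).atTop_div_const (zero_lt_two' ℝ))
  refine (h.div_const 2).congr fun n => ?_
  rw [Function.comp_apply, show (2 : ℝ) = (2 : ℕ) by norm_num, Nat.floor_div_eq_div]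
  field_simp

lemma tendsto_natCast_add_one_div_two_div_atTop :
    Tendsto (fun n : ℕ => (((n + 1) / 2 : ℕ) : ℝ) / n) atTop (𝓝 (1 / 2)) := by
  have h := (tendsto_const_nhds (x := (1 : ℝ))).sub tendsto_natCast_div_two_div_atTop
  rw [show (1 : ℝ) - 1 / 2 = 1 / 2 by norm_num] at h
  refine h.congr' ?_
  filter_upwards [eventually_ne_atTop 0] with n hn
  rw [show (n + 1) / 2 = n - n / 2 by omega, Nat.cast_sub (Nat.div_le_self n 2)]
  field_simp

section

variable {Ω : Type*} {m : MeasurableSpace Ω} {μ : Measure Ω}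

lemma hasDerivAt_deriv_cgf_zero [IsProbabilityMeasure μ] {X : Ω → ℝ}
    (h : 0 ∈ interior (integrableExpSet X μ)) :
    HasDerivAt (deriv (cgf X μ)) (variance X μ) 0 := by
  have hd : HasDerivAt (deriv (cgf X μ)) (iteratedDeriv 2 (cgf X μ) 0) 0 := by
    rw [iteratedDeriv_succ, iteratedDeriv_one]
    exact ((analyticAt_cgf h).deriv.differentiableAt).hasDerivAt
  have hX : AEMeasurable X μ := (integrable_of_mem_interior_integrableExpSet h).aemeasurable
  convert hd using 1
  simp [iteratedDeriv_two_cgf_eq_integral h, deriv_cgf_zero h, variance_eq_integral hX]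

theorem tendsto_cgf_sub_mul_integral_div_sq [IsProbabilityMeasure μ] {X : Ω → ℝ}
    (h : 0 ∈ interior (integrableExpSet X μ)) :
    Tendsto (fun t => (cgf X μ t - t * μ[X]) / t ^ 2) (𝓝[≠] 0) (𝓝 (variance X μ / 2)) := by
  have hderiv : ∀ᶠ t in 𝓝 0,
      HasDerivAt (fun t => cgf X μ t - t * μ[X]) (deriv (cgf X μ) t - μ[X]) t := by
    filter_upwards [isOpen_interior.mem_nhds h] with t ht
    exact (analyticAt_cgf ht).differentiableAt.hasDerivAt.sub (hasDerivAt_mul_const μ[X])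
  have hmean : deriv (cgf X μ) 0 = μ[X] := by simp [deriv_cgf_zero h]
  have hslope : Tendsto (fun t => (deriv (cgf X μ) t - μ[X]) / (2 * t)) (𝓝[≠] 0)
      (𝓝 (variance X μ / 2)) := by
    refine ((hasDerivAt_deriv_cgf_zero h).tendsto_slope_zero.div_const 2).congr fun t => ?_
    simp only [zero_add, hmean, smul_eq_mul]
    ring
  have hcont : Tendsto (fun t => cgf X μ t - t * μ[X]) (𝓝[≠] 0) (𝓝 0) := by
    simpa using hderiv.self_of_nhds.continuousAt.tendsto.mono_left nhdsWithin_le_nhds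
  refine HasDerivAt.lhopital_zero_nhdsNE (nhdsWithin_le_nhds hderiv)
    (Eventually.of_forall fun t => by simpa using hasDerivAt_pow 2 t) ?_ hcont ?_ hslope
  · filter_upwards [self_mem_nhdsWithin] with t ht using by simpa using ht
  · exact tendsto_nhdsWithin_of_tendsto_nhds (by simpa using (continuous_pow 2).tendsto (0 : ℝ))

theorem tendsto_cgf_sum_sub_div_of_identDistrib_mod_two [IsProbabilityMeasure μ] {Z : ℕ → Ω → ℝ}
    (hmeas : ∀ k, Measurable (Z k)) (hindep : iIndepFun Z μ)
    (hident : ∀ k, IdentDistrib (Z k) (Z (k % 2)) μ μ)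
    (hexp : ∀ k t, Integrable (fun ω => exp (t * Z k ω)) μ)
    {t : ℕ → ℝ} (ht : Tendsto t atTop (𝓝[≠] 0)) :
    Tendsto (fun n : ℕ => (cgf (∑ k ∈ range n, Z k) μ (t n) - t n * μ[∑ k ∈ range n, Z k])
        / (n * t n ^ 2)) atTop (𝓝 ((variance (Z 0) μ + variance (Z 1) μ) / 4)) := by
  set D : ℕ → ℝ → ℝ := fun j s => cgf (Z j) μ s - s * μ[Z j]
  have hsplit : ∀ n s, cgf (∑ k ∈ range n, Z k) μ s - s * μ[∑ k ∈ range n, Z k]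
      = ((n + 1) / 2 : ℕ) * D 0 s + (n / 2 : ℕ) * D 1 s := by
    intro n s
    have hint : ∀ k, Integrable (Z k) μ := fun k =>
      integrable_of_mem_interior_integrableExpSet (by simp [integrableExpSet, hexp k])
    simp only [← nsmul_eq_mul, ← sum_range_mod_two (fun j => D j s) n, D]
    rw [hindep.cgf_sum hmeas fun k _ => hexp k s]
    simp only [Finset.sum_apply]
    rw [integral_finsetSum _ fun k _ => hint k, mul_sum, ← sum_sub_distrib]
    refine sum_congr rfl fun k _ => ?_
    simp only [cgf, mgf_congr_identDistrib (hident k), (hident k).integral_eq]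
  have hD : ∀ j, Tendsto (fun n => D j (t n) / t n ^ 2) atTop (𝓝 (variance (Z j) μ / 2)) :=
    fun j => (tendsto_cgf_sub_mul_integral_div_sq
      (by simp [integrableExpSet, hexp j])).comp ht
  have hlim := (tendsto_natCast_add_one_div_two_div_atTop.mul (hD 0)).add
    (tendsto_natCast_div_two_div_atTop.mul (hD 1))
  rw [show (variance (Z 0) μ + variance (Z 1) μ) / 4
    = 1 / 2 * (variance (Z 0) μ / 2) + 1 / 2 * (variance (Z 1) μ / 2) by ring]
  refine hlim.congr fun n => ?_
  rw [hsplit]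
  ring

lemma identDistrib_mod_two_of_map_eq {E : Type*} [MeasurableSpace E] {V : ℕ → Ω → E}
    (hV : ∀ k, AEMeasurable (V k) μ) {ν₀ ν₁ : Measure E} (h₀ : ∀ k, Even k → μ.map (V k) = ν₀)
    (h₁ : ∀ k, Odd k → μ.map (V k) = ν₁) (k : ℕ) : IdentDistrib (V k) (V (k % 2)) μ μ := by
  refine ⟨hV k, hV _, ?_⟩
  rcases Nat.even_or_odd k with hk | hk
  · rw [h₀ k hk, h₀ _ (by simp [Nat.even_iff.mp hk])]
  · rw [h₁ k hk, h₁ _ (by simp [Nat.odd_iff.mp hk])]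

section ThreePointLaw

variable {E : Type*} [MeasurableSpace E] [MeasurableSingletonClass E] {V : Ω → E}
  {q₀ q₁ q₂ : ℝ} {p₀ p₁ p₂ : E}

lemma integrable_comp_of_map_eq_three_dirac (hV : Measurable V)
    (hlaw : μ.map V = ENNReal.ofReal q₀ • Measure.dirac p₀ + ENNReal.ofReal q₁ • Measure.dirac p₁
      + ENNReal.ofReal q₂ • Measure.dirac p₂)
    {φ : E → ℝ} (hφ : Measurable φ) : Integrable (fun ω => φ (V ω)) μ := by
  have hdirac : ∀ (q : ℝ) (p : E), Integrable φ (ENNReal.ofReal q • Measure.dirac p) :=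
    fun q p => (integrable_dirac enorm_lt_top).smul_measure ENNReal.ofReal_ne_top
  refine (integrable_map_measure hφ.aestronglyMeasurable hV.aemeasurable).mp ?_
  rw [hlaw]
  exact ((hdirac q₀ p₀).add_measure (hdirac q₁ p₁)).add_measure (hdirac q₂ p₂)

lemma integral_comp_of_map_eq_three_dirac (hV : Measurable V)
    (hlaw : μ.map V = ENNReal.ofReal q₀ • Measure.dirac p₀ + ENNReal.ofReal q₁ • Measure.dirac p₁
      + ENNReal.ofReal q₂ • Measure.dirac p₂)
    (hq₀ : 0 ≤ q₀) (hq₁ : 0 ≤ q₁) (hq₂ : 0 ≤ q₂) {φ : E → ℝ} (hφ : Measurable φ) :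
    ∫ ω, φ (V ω) ∂μ = q₀ * φ p₀ + q₁ * φ p₁ + q₂ * φ p₂ := by
  have hdirac : ∀ (q : ℝ) (p : E), Integrable φ (ENNReal.ofReal q • Measure.dirac p) :=
    fun q p => (integrable_dirac enorm_lt_top).smul_measure ENNReal.ofReal_ne_top
  rw [← integral_map hV.aemeasurable hφ.aestronglyMeasurable, hlaw,
    integral_add_measure ((hdirac q₀ p₀).add_measure (hdirac q₁ p₁)) (hdirac q₂ p₂),
    integral_add_measure (hdirac q₀ p₀) (hdirac q₁ p₁)]
  simp [integral_smul_measure, hq₀, hq₁, hq₂]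

lemma variance_comp_of_map_eq_three_dirac (hV : Measurable V)
    (hlaw : μ.map V = ENNReal.ofReal q₀ • Measure.dirac p₀ + ENNReal.ofReal q₁ • Measure.dirac p₁
      + ENNReal.ofReal q₂ • Measure.dirac p₂)
    (hq₀ : 0 ≤ q₀) (hq₁ : 0 ≤ q₁) (hq₂ : 0 ≤ q₂) {φ : E → ℝ} (hφ : Measurable φ) :
    variance (fun ω => φ (V ω)) μ = q₀ * (φ p₀ - (q₀ * φ p₀ + q₁ * φ p₁ + q₂ * φ p₂)) ^ 2
      + q₁ * (φ p₁ - (q₀ * φ p₀ + q₁ * φ p₁ + q₂ * φ p₂)) ^ 2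
      + q₂ * (φ p₂ - (q₀ * φ p₀ + q₁ * φ p₁ + q₂ * φ p₂)) ^ 2 := by
  rw [variance_eq_integral (X := fun ω => φ (V ω)) (hφ.comp hV).aemeasurable,
    integral_comp_of_map_eq_three_dirac hV hlaw hq₀ hq₁ hq₂ hφ]
  exact integral_comp_of_map_eq_three_dirac hV hlaw hq₀ hq₁ hq₂ ((hφ.sub_const _).pow_const 2)

end ThreePointLaw

lemma mul_log_integral_exp_sub_eq_cgf_sum {X Y : ℕ → Ω → ℝ} (hX : ∀ k, Integrable (X k) μ)
    (hY : ∀ k, Integrable (Y k) μ) (lam₁ lam₂ c : ℝ) {n : ℕ} (hc : 0 < n * c) :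
    c * (log (∫ ω, exp (lam₁ * (∑ k ∈ range n, X k ω) / √(n * c)
          + lam₂ * (∑ k ∈ range n, Y k ω) / √(n * c)) ∂μ)
        - (lam₁ * ∫ ω, (∑ k ∈ range n, X k ω) ∂μ + lam₂ * ∫ ω, (∑ k ∈ range n, Y k ω) ∂μ)
          / √(n * c))
      = (cgf (∑ k ∈ range n, fun ω => lam₁ * X k ω + lam₂ * Y k ω) μ (√(n * c))⁻¹
          - (√(n * c))⁻¹ * μ[∑ k ∈ range n, fun ω => lam₁ * X k ω + lam₂ * Y k ω])
        / (n * (√(n * c))⁻¹ ^ 2) := by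
  set s := √(n * c)
  have hmean : μ[∑ k ∈ range n, fun ω => lam₁ * X k ω + lam₂ * Y k ω]
      = lam₁ * ∫ ω, (∑ k ∈ range n, X k ω) ∂μ + lam₂ * ∫ ω, (∑ k ∈ range n, Y k ω) ∂μ := by
    have hXY : ∀ k, Integrable (fun ω => lam₁ * X k ω + lam₂ * Y k ω) μ :=
      fun k => ((hX k).const_mul lam₁).add ((hY k).const_mul lam₂)
    simp only [Finset.sum_apply]
    rw [integral_finsetSum _ fun k _ => hXY k,
      integral_finsetSum _ fun k _ => hX k, integral_finsetSum _ fun k _ => hY k, mul_sum,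
      mul_sum, ← sum_add_distrib]
    refine sum_congr rfl fun k _ => ?_
    rw [integral_add ((hX k).const_mul lam₁) ((hY k).const_mul lam₂), integral_const_mul,
      integral_const_mul]
  have hexp : ∀ ω, s⁻¹ * (∑ k ∈ range n, fun ω => lam₁ * X k ω + lam₂ * Y k ω) ω
      = lam₁ * (∑ k ∈ range n, X k ω) / s + lam₂ * (∑ k ∈ range n, Y k ω) / s := by
    intro ω
    simp only [Finset.sum_apply, sum_add_distrib, ← mul_sum]
    ring
  have hscale : (n : ℝ) * s⁻¹ ^ 2 = c⁻¹ := by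
    obtain ⟨hn0, hc0⟩ := mul_ne_zero_iff.mp hc.ne'
    rw [inv_pow, sq_sqrt hc.le]
    field_simp
  simp only [cgf, mgf, hexp, hmean, hscale]
  field_simp

end

theorem stmt_18_general {Ω : Type*} [MeasurableSpace Ω] (μ : Measure Ω) [IsProbabilityMeasure μ]
    (a : ℝ)
    (q₀₀ q₀₁ q₀₂ q₁₀ q₁₁ q₁₂ : ℝ)
    (hq₀₀ : 0 < q₀₀) (hq₀₁ : 0 < q₀₁) (hq₀₂ : 0 < q₀₂)
    (hq₁₀ : 0 < q₁₀) (hq₁₁ : 0 < q₁₁) (hq₁₂ : 0 < q₁₂)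
    (hsum₀ : q₀₀ + q₀₁ + q₀₂ = 1) (hsum₁ : q₁₀ + q₁₁ + q₁₂ = 1)
    (X Y : ℕ → Ω → ℝ)
    (hXm : ∀ k, Measurable (X k)) (hYm : ∀ k, Measurable (Y k))
    (hlaw₀ : ∀ k, Even k → μ.map (fun ω => (X k ω, Y k ω)) =
        ENNReal.ofReal q₀₀ • Measure.dirac ((a, 0) : ℝ × ℝ)
      + ENNReal.ofReal q₀₁ • Measure.dirac ((-a / 2, a * Real.sqrt 3 / 2) : ℝ × ℝ)
      + ENNReal.ofReal q₀₂ • Measure.dirac ((-a / 2, -(a * Real.sqrt 3) / 2) : ℝ × ℝ))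
    (hlaw₁ : ∀ k, Odd k → μ.map (fun ω => (X k ω, Y k ω)) =
        ENNReal.ofReal q₁₀ • Measure.dirac ((-a, 0) : ℝ × ℝ)
      + ENNReal.ofReal q₁₁ • Measure.dirac ((a / 2, -(a * Real.sqrt 3) / 2) : ℝ × ℝ)
      + ENNReal.ofReal q₁₂ • Measure.dirac ((a / 2, a * Real.sqrt 3 / 2) : ℝ × ℝ))
    (hind : iIndepFun
      (fun k ω => (X k ω, Y k ω)) μ)
    (aseq : ℕ → ℝ)
    (hainf : Filter.Tendsto (fun n : ℕ => (n : ℝ) * aseq n) Filter.atTop Filter.atTop)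
    (lam₁ lam₂ : ℝ) :
    Filter.Tendsto (fun n : ℕ => aseq n *
        (Real.log (∫ ω, Real.exp
            (lam₁ * (∑ k ∈ Finset.range n, X k ω) / Real.sqrt ((n : ℝ) * aseq n)
             + lam₂ * (∑ k ∈ Finset.range n, Y k ω) / Real.sqrt ((n : ℝ) * aseq n)) ∂μ)
          - (lam₁ * (∫ ω, (∑ k ∈ Finset.range n, X k ω) ∂μ)
             + lam₂ * (∫ ω, (∑ k ∈ Finset.range n, Y k ω) ∂μ)) / Real.sqrt ((n : ℝ) * aseq n)))
      Filter.atTop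
      (nhds ((1 / 2) *
        (lam₁ ^ 2 * ((9 * a ^ 2 / 8) *
            ((q₀₁ + q₀₂) - (q₀₁ + q₀₂) ^ 2 + (q₁₁ + q₁₂) - (q₁₁ + q₁₂) ^ 2))
         + lam₂ ^ 2 * ((3 * a ^ 2 / 8) *
            ((q₀₁ + q₀₂) - (q₀₁ - q₀₂) ^ 2 + (q₁₁ + q₁₂) - (q₁₁ - q₁₂) ^ 2))
         + 2 * lam₁ * lam₂ * ((3 * Real.sqrt 3 * a ^ 2 / 8) *
            (q₀₁ * (q₀₁ - 1) + q₀₂ * (1 - q₀₂) - q₁₁ * (1 - q₁₁) + q₁₂ * (1 - q₁₂)))))) := by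
  set V : ℕ → Ω → ℝ × ℝ := fun k ω => (X k ω, Y k ω)
  set φ : ℝ × ℝ → ℝ := fun p => lam₁ * p.1 + lam₂ * p.2
  have hV : ∀ k, Measurable (V k) := fun k => (hXm k).prodMk (hYm k)
  have hφ : Measurable φ := by fun_prop
  have hlaw := identDistrib_mod_two_of_map_eq (fun k => (hV k).aemeasurable) hlaw₀ hlaw₁
  have hintegrable : ∀ k {ψ : ℝ × ℝ → ℝ}, Measurable ψ → Integrable (fun ω => ψ (V k ω)) μ := by
    intro k ψ hψ
    rcases Nat.even_or_odd k with hk | hk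
    · exact integrable_comp_of_map_eq_three_dirac (hV k) (hlaw₀ k hk) hψ
    · exact integrable_comp_of_map_eq_three_dirac (hV k) (hlaw₁ k hk) hψ
  have ht : Tendsto (fun n : ℕ => (√(n * aseq n))⁻¹) atTop (𝓝[≠] 0) :=
    (tendsto_inv_atTop_nhdsGT_zero.comp (tendsto_sqrt_atTop.comp hainf)).mono_right
      (nhdsGT_le_nhdsNE 0)
  have hwalk := tendsto_cgf_sum_sub_div_of_identDistrib_mod_two (Z := fun k ω => φ (V k ω))
    (fun k => hφ.comp (hV k)) (hind.comp (fun _ => φ) fun _ => hφ) (fun k => (hlaw k).comp hφ)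
    (fun k t => hintegrable k (ψ := fun p => exp (t * φ p)) (by fun_prop)) ht
  rw [variance_comp_of_map_eq_three_dirac (hV 0) (hlaw₀ 0 (by simp)) hq₀₀.le hq₀₁.le hq₀₂.le hφ,
    variance_comp_of_map_eq_three_dirac (hV 1) (hlaw₁ 1 odd_one) hq₁₀.le hq₁₁.le hq₁₂.le hφ]
    at hwalk
  convert hwalk.congr' ?_ using 2
  · obtain rfl : q₀₀ = 1 - q₀₁ - q₀₂ := by linarith
    obtain rfl : q₁₀ = 1 - q₁₁ - q₁₂ := by linarith
    have hr : √3 ^ 2 = 3 := sq_sqrt (by norm_num)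
    simp only [φ]
    ring_nf
    rw [hr]
    ring_nf
  · filter_upwards [hainf.eventually_gt_atTop 0] with n hn
    exact (mul_log_integral_exp_sub_eq_cgf_sum (fun k => hintegrable k measurable_fst)
      (fun k => hintegrable k measurable_snd) lam₁ lam₂ (aseq n) hn).symm

theorem stmt_18 {Ω : Type*} [MeasurableSpace Ω] (μ : Measure Ω) [IsProbabilityMeasure μ]
    (a : ℝ) (ha : 0 < a)
    (q₀₀ q₀₁ q₀₂ q₁₀ q₁₁ q₁₂ : ℝ)
    (hq₀₀ : 0 < q₀₀) (hq₀₁ : 0 < q₀₁) (hq₀₂ : 0 < q₀₂)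
    (hq₁₀ : 0 < q₁₀) (hq₁₁ : 0 < q₁₁) (hq₁₂ : 0 < q₁₂)
    (hsum₀ : q₀₀ + q₀₁ + q₀₂ = 1) (hsum₁ : q₁₀ + q₁₁ + q₁₂ = 1)
    (X Y : ℕ → Ω → ℝ)
    (hXm : ∀ k, Measurable (X k)) (hYm : ∀ k, Measurable (Y k))
    (hlaw₀ : ∀ k, Even k → μ.map (fun ω => (X k ω, Y k ω)) =
        ENNReal.ofReal q₀₀ • Measure.dirac ((a, 0) : ℝ × ℝ)
      + ENNReal.ofReal q₀₁ • Measure.dirac ((-a / 2, a * Real.sqrt 3 / 2) : ℝ × ℝ)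
      + ENNReal.ofReal q₀₂ • Measure.dirac ((-a / 2, -(a * Real.sqrt 3) / 2) : ℝ × ℝ))
    (hlaw₁ : ∀ k, Odd k → μ.map (fun ω => (X k ω, Y k ω)) =
        ENNReal.ofReal q₁₀ • Measure.dirac ((-a, 0) : ℝ × ℝ)
      + ENNReal.ofReal q₁₁ • Measure.dirac ((a / 2, -(a * Real.sqrt 3) / 2) : ℝ × ℝ)
      + ENNReal.ofReal q₁₂ • Measure.dirac ((a / 2, a * Real.sqrt 3 / 2) : ℝ × ℝ))
    (hind : iIndepFun
      (fun k ω => (X k ω, Y k ω)) μ)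
    (aseq : ℕ → ℝ) (haseq : ∀ n, 0 < aseq n)
    (ha0 : Filter.Tendsto aseq Filter.atTop (nhds 0))
    (hainf : Filter.Tendsto (fun n : ℕ => (n : ℝ) * aseq n) Filter.atTop Filter.atTop)
    (lam₁ lam₂ : ℝ) :
    Filter.Tendsto (fun n : ℕ => aseq n *
        (Real.log (∫ ω, Real.exp
            (lam₁ * (∑ k ∈ Finset.range n, X k ω) / Real.sqrt ((n : ℝ) * aseq n)
             + lam₂ * (∑ k ∈ Finset.range n, Y k ω) / Real.sqrt ((n : ℝ) * aseq n)) ∂μ)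
          - (lam₁ * (∫ ω, (∑ k ∈ Finset.range n, X k ω) ∂μ)
             + lam₂ * (∫ ω, (∑ k ∈ Finset.range n, Y k ω) ∂μ)) / Real.sqrt ((n : ℝ) * aseq n)))
      Filter.atTop
      (nhds ((1 / 2) *
        (lam₁ ^ 2 * ((9 * a ^ 2 / 8) *
            ((q₀₁ + q₀₂) - (q₀₁ + q₀₂) ^ 2 + (q₁₁ + q₁₂) - (q₁₁ + q₁₂) ^ 2))
         + lam₂ ^ 2 * ((3 * a ^ 2 / 8) *
            ((q₀₁ + q₀₂) - (q₀₁ - q₀₂) ^ 2 + (q₁₁ + q₁₂) - (q₁₁ - q₁₂) ^ 2))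
         + 2 * lam₁ * lam₂ * ((3 * Real.sqrt 3 * a ^ 2 / 8) *
            (q₀₁ * (q₀₁ - 1) + q₀₂ * (1 - q₀₂) - q₁₁ * (1 - q₁₁) + q₁₂ * (1 - q₁₂)))))) :=
  stmt_18_general μ a q₀₀ q₀₁ q₀₂ q₁₀ q₁₁ q₁₂ hq₀₀ hq₀₁ hq₀₂ hq₁₀ hq₁₁ hq₁₂ hsum₀ hsum₁ X Y hXm hYm
    hlaw₀ hlaw₁ hind aseq hainf lam₁ lam₂
end
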